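/- Fix t ∈ ℝ and s ∈ ℂ with Re(s) > 1. Then Σ_{k=1}^∞ β₀(kt)/k^s = s·∫₁^∞ B_{x,0}(t)/x^s dx, where both the series and the integral converge absolutely, β₀(u) = u - ⌊u⌋ - 1/2 for u ∉ ℤ and β₀(u) = 0 for u ∈ ℤ, and B_{x,0}(t) = (1/x)·Σ_{1 ≤ k ≤ ⌊x⌋} β₀(kt). -/

import Mathlib

/-!
The identity is Abel summation for the Dirichlet series of the bounded sequence `β₀(kt)`:
`∑ a_k k^{-s} = s ∫₁^∞ (∑_{k ≤ x} a_k) x^{-s-1} dx`, and `(∑_{k ≤ x} a_k) x^{-s-1} = B_{x,0}(t) x^{-s}`.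
Absolute convergence comes from `|β₀| ≤ 1/2`, which also gives `|B_{x,0}(t)| ≤ 1/2`.
-/

open MeasureTheory

noncomputable def beta0 (u : ℝ) : ℝ := if Int.fract u = 0 then 0 else u - ⌊u⌋ - 1/2

noncomputable def B0 (x : ℝ) (t : ℝ) : ℝ :=
  (1/x) * ∑ k ∈ Finset.Icc 1 ⌊x⌋₊, beta0 (k * t)

open Complex Finset Filter Asymptotics

lemma abs_beta0_le (u : ℝ) : |beta0 u| ≤ 1 / 2 := by
  unfold beta0
  split_ifs
  · norm_num
  · rw [← Int.fract, abs_le]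
    constructor <;> linarith [Int.fract_nonneg u, Int.fract_lt_one u]

lemma abs_sum_Icc_floor_le {a : ℕ → ℝ} {C : ℝ} (ha : ∀ k, |a k| ≤ C) {x : ℝ} (hx : 0 ≤ x) :
    |∑ k ∈ Icc 1 ⌊x⌋₊, a k| ≤ C * x := by
  have hC : 0 ≤ C := (abs_nonneg _).trans (ha 0)
  calc |∑ k ∈ Icc 1 ⌊x⌋₊, a k| ≤ ∑ k ∈ Icc 1 ⌊x⌋₊, |a k| := abs_sum_le_sum_abs _ _
    _ ≤ ∑ _k ∈ Icc 1 ⌊x⌋₊, C := sum_le_sum fun k _ => ha k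
    _ = C * ⌊x⌋₊ := by simp [mul_comm]
    _ ≤ C * x := mul_le_mul_of_nonneg_left (Nat.floor_le hx) hC

lemma abs_B0_le (x t : ℝ) : |B0 x t| ≤ 1 / 2 := by
  rcases le_or_gt x 0 with hx | hx
  · simp [B0, Nat.floor_eq_zero.mpr (hx.trans_lt one_pos)]
  · rw [B0, abs_mul, abs_of_pos (one_div_pos.mpr hx), one_div_mul_eq_div,
      div_le_iff₀ hx]
    exact abs_sum_Icc_floor_le (fun k => abs_beta0_le _) hx.le

lemma measurable_B0 (t : ℝ) : Measurable fun x => B0 x t :=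
  (measurable_const.div measurable_id).mul <|
    (measurable_from_nat (f := fun n => ∑ k ∈ Icc 1 n, beta0 (k * t))).comp Nat.measurable_floor

lemma B0_div_cpow_eq {x : ℝ} (hx : 0 < x) (t : ℝ) (s : ℂ) :
    (B0 x t : ℂ) / (x : ℂ) ^ s
      = (∑ k ∈ Icc 1 ⌊x⌋₊, (beta0 (k * t) : ℂ)) * (x : ℂ) ^ (-(s + 1)) := by
  have hx' : (x : ℂ) ≠ 0 := ofReal_ne_zero.mpr hx.ne'
  rw [B0, neg_add, cpow_add _ _ hx', cpow_neg, cpow_neg_one]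
  push_cast
  ring

lemma integrableOn_B0_div_cpow (t : ℝ) {s : ℂ} (hs : 1 < s.re) :
    IntegrableOn (fun x : ℝ => (B0 x t : ℂ) / (x : ℂ) ^ s) (Set.Ioi 1) := by
  simp_rw [div_eq_mul_inv, ← cpow_neg]
  refine (integrableOn_Ioi_cpow_of_lt (by simpa using hs) one_pos).bdd_mul
    (c := 1 / 2) ((measurable_ofReal.comp (measurable_B0 t)).aestronglyMeasurable) ?_
  exact ae_of_all _ fun x => by simpa [norm_real] using abs_B0_le x t

lemma summable_pnat_norm_div_cpow {f : ℕ → ℂ} {s : ℂ} (hf : LSeriesSummable f s) :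
    Summable fun k : ℕ+ => ‖f k / (k : ℂ) ^ s‖ := by
  refine (summable_pnat_iff_summable_nat.mpr hf.norm).congr fun k => ?_
  rw [LSeries.term_of_ne_zero k.ne_zero]

lemma tsum_pnat_div_cpow_eq_LSeries (f : ℕ → ℂ) (s : ℂ) :
    ∑' k : ℕ+, f k / (k : ℂ) ^ s = LSeries f s := by
  rw [LSeries, ← tsum_pnat_eq_tsum_of_eq_zero (LSeries.term_zero f s)]
  exact tsum_congr fun k => (LSeries.term_of_ne_zero k.ne_zero f s).symm

lemma isBigO_sum_Icc_norm_of_bounded {f : ℕ → ℂ} {C : ℝ} (hf : ∀ n, ‖f n‖ ≤ C) :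
    (fun n ↦ ∑ k ∈ Icc 1 n, ‖f k‖) =O[atTop] fun n ↦ (n : ℝ) ^ (1 : ℝ) := by
  refine IsBigO.of_bound C (Eventually.of_forall fun n => ?_)
  simpa [Real.norm_eq_abs, abs_of_nonneg (sum_nonneg fun k _ => norm_nonneg (f k))] using
    abs_sum_Icc_floor_le (a := fun k => ‖f k‖) (by simpa using hf) (Nat.cast_nonneg n)

theorem stmt_16 (t : ℝ) (s : ℂ) (hs : 1 < s.re) :
    Summable (fun k : ℕ+ => ‖(beta0 (k * t) : ℂ) / (k : ℂ) ^ s‖) ∧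
    IntegrableOn (fun x : ℝ => (B0 x t : ℂ) / (x : ℂ) ^ s) (Set.Ioi 1) ∧
    ∑' k : ℕ+, (beta0 (k * t) : ℂ) / (k : ℂ) ^ s
      = s * ∫ x in Set.Ioi (1:ℝ), (B0 x t : ℂ) / (x : ℂ) ^ s := by
  let f : ℕ → ℂ := fun k => (beta0 (k * t) : ℂ)
  have hf : ∀ n, ‖f n‖ ≤ 1 / 2 := fun n => by
    simpa only [f, norm_real, Real.norm_eq_abs] using abs_beta0_le (n * t)
  refine ⟨summable_pnat_norm_div_cpow (f := f) (LSeriesSummable_of_bounded_of_one_lt_re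
    (fun n _ => hf n) hs), integrableOn_B0_div_cpow t hs, ?_⟩
  rw [tsum_pnat_div_cpow_eq_LSeries f s,
    LSeries_eq_mul_integral' f zero_le_one (by linarith) (isBigO_sum_Icc_norm_of_bounded hf)]
  congr 1
  exact setIntegral_congr_fun measurableSet_Ioi fun x hx =>
    (B0_div_cpow_eq (zero_lt_one.trans hx) t s).symm
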